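/- arXiv:0902.3863 — 7 statements merged into one kernel-verified Lean document; each statement's English description precedes it below -/
import Mathlib

section
/- For all integers N ≥ 2, k ≥ 1, n with 0 ≤ n ≤ k−1, and every radius ε > 0, the iterated contour integral (1/k)·(1/(2πi))²·∮_{|x₁|=5ε} ∮_{|x₀|=ε} x₀^{N−2−n}·x₁^{n−1+N−k}·e(k,1;x₀,x₁)/(x₀^N·x₁^N) dx₀ dx₁ equals L̃_n^{N,k,1}; equivalently, it equals k times the coefficient of x₀^n x₁^{k−1−n} in the bivariate polynomial ∏_{j=1}^{k−1}(j·x₀ + (k−j)·x₁). (Theorem 1, degree d = 1 case.) -/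
/-- `e(k,d;u,v) := ∏_{m=0}^{kd} (m·u + (kd−m)·v)/d`. -/
noncomputable def eFun (k d : ℕ) (u v : ℂ) : ℂ :=
  ∏ m ∈ Finset.range (k * d + 1), (((m : ℂ) * u + ((k * d - m : ℕ) : ℂ) * v) / (d : ℂ))

/-- The degree-1 virtual structure constant `L̃_n^{N,k,1}` (independent of `N`):
the coefficient of `w^n` in `k·∏_{j=1}^{k−1}(j·w + (k−j))`, and `0` for `n` outside `[0, k−1]`. -/
noncomputable def L1 (k : ℕ) (n : ℤ) : ℚ :=
  if 0 ≤ n then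
    (Polynomial.C (k : ℚ) *
      ∏ j ∈ Finset.Icc 1 (k - 1),
        (Polynomial.C (j : ℚ) * Polynomial.X + Polynomial.C ((k - j : ℕ) : ℚ))).coeff n.toNat
  else 0

open Finset Metric Polynomial in
lemma circleIntegral_finset_sum {ι : Type*} (s : Finset ι) (f : ι → ℂ → ℂ) (c : ℂ) (R : ℝ)
    (h : ∀ i ∈ s, CircleIntegrable (f i) c R) :
    (∮ z in C(c, R), ∑ i ∈ s, f i z) = ∑ i ∈ s, ∮ z in C(c, R), f i z := by
  simp only [circleIntegral, Finset.smul_sum]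
  exact intervalIntegral.integral_finset_sum fun i hi => (h i hi).out

lemma circleIntegral_zpow (e : ℤ) (R : ℝ) (hR : R ≠ 0) :
    (∮ z in C((0:ℂ), R), z ^ e) = if e = -1 then 2 * Real.pi * Complex.I else 0 := by
  have h0 : (fun z : ℂ => z ^ e) = fun z : ℂ => (z - 0) ^ e := by funext z; rw [sub_zero]
  split_ifs with he
  · subst he
    have h := circleIntegral.integral_sub_center_inv (0 : ℂ) hR
    rw [h0]
    simp only [zpow_neg_one]
    exact h
  · rw [h0]; exact circleIntegral.integral_sub_zpow_of_ne he _ _ _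

lemma circleIntegrable_const_mul_zpow (c w : ℂ) (e f : ℤ) (R : ℝ) (hR : 0 < R) :
    CircleIntegrable (fun z : ℂ => c * (z ^ e * w ^ f)) 0 R := by
  apply ContinuousOn.circleIntegrable hR.le
  apply continuousOn_const.mul
  exact (continuousOn_id.zpow₀ e fun z hz =>
    Or.inl (Metric.ne_of_mem_sphere hz hR.ne')).mul continuousOn_const

/-- Theorem 1, degree `d = 1` case: the iterated contour integral
`(1/k)·(1/(2πi))²·∮_{|x₁|=5ε} ∮_{|x₀|=ε} x₀^{N−2−n}·x₁^{n−1+N−k}·e(k,1;x₀,x₁)/(x₀^N·x₁^N)`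
equals `L̃_n^{N,k,1}`, i.e. `k` times the coefficient of `w^n` in `∏_{j=1}^{k−1}(j·w+(k−j))`. -/
theorem stmt0 (N k : ℕ) (hN : 2 ≤ N) (hk : 1 ≤ k) (n : ℤ)
    (hn0 : 0 ≤ n) (hn1 : n ≤ (k : ℤ) - 1) (ε : ℝ) (hε : 0 < ε) :
    (1 / (k : ℂ)) * (1 / (2 * (Real.pi : ℂ) * Complex.I)) ^ 2 *
      (∮ x₁ in C(0, 5 * ε), ∮ x₀ in C(0, ε),
        x₀ ^ ((N : ℤ) - 2 - n) * x₁ ^ (n - 1 + (N : ℤ) - (k : ℤ)) * eFun k 1 x₀ x₁ /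
          (x₀ ^ N * x₁ ^ N)) = (L1 k n : ℂ) := by
  classical
  obtain ⟨m, rfl⟩ : ∃ m : ℕ, n = (m : ℤ) := ⟨n.toNat, (Int.toNat_of_nonneg hn0).symm⟩
  have hmk : m < k := by omega
  set Q : Polynomial ℂ :=
    ∏ j ∈ Finset.Icc 1 (k - 1),
      (Polynomial.C (j : ℂ) * Polynomial.X + Polynomial.C ((k - j : ℕ) : ℂ)) with hQ
  -- degree bound
  have hfac : ∀ j : ℕ,
      (Polynomial.C (j : ℂ) * Polynomial.X + Polynomial.C ((k - j : ℕ) : ℂ)).natDegree ≤ 1 := by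
    intro j
    refine le_trans (Polynomial.natDegree_add_le _ _) (max_le ?_ ?_)
    · exact le_trans (Polynomial.natDegree_C_mul_le _ _) Polynomial.natDegree_X_le
    · simp [Polynomial.natDegree_C]
  have hQdeg : Q.natDegree < k := by
    have h1 := Polynomial.natDegree_prod_le (Finset.Icc 1 (k - 1))
      (fun j => Polynomial.C (j : ℂ) * Polynomial.X + Polynomial.C ((k - j : ℕ) : ℂ))
    have h2 : ∑ j ∈ Finset.Icc 1 (k - 1),
        (Polynomial.C (j : ℂ) * Polynomial.X + Polynomial.C ((k - j : ℕ) : ℂ)).natDegree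
        ≤ ∑ _j ∈ Finset.Icc 1 (k - 1), 1 := Finset.sum_le_sum fun j _ => hfac j
    have h3 : ∑ _j ∈ Finset.Icc 1 (k - 1), 1 = k - 1 := by
      simp [Nat.card_Icc]
    have : Q.natDegree ≤ k - 1 := by rw [hQ]; omega
    omega
  -- pointwise kernel identity
  have hker : ∀ x₀ x₁ : ℂ, x₀ ≠ 0 → x₁ ≠ 0 →
      x₀ ^ ((N : ℤ) - 2 - (m : ℤ)) * x₁ ^ ((m : ℤ) - 1 + (N : ℤ) - (k : ℤ)) * eFun k 1 x₀ x₁ /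
          (x₀ ^ N * x₁ ^ N)
        = ∑ a ∈ Finset.range k, ((k : ℂ) ^ 2 * Q.coeff a) *
            (x₀ ^ ((a : ℤ) - 1 - (m : ℤ)) * x₁ ^ ((m : ℤ) - 1 - (a : ℤ))) := by
    intro x₀ x₁ hx₀ hx₁
    have hef : eFun k 1 x₀ x₁ =
        (∏ i ∈ Finset.range (k - 1), (((i + 1 : ℕ) : ℂ) * x₀ + ((k - (i + 1) : ℕ) : ℂ) * x₁)) *
          ((k : ℂ) * x₁) * ((k : ℂ) * x₀) := by
      unfold eFun
      simp only [mul_one, Nat.cast_one, div_one]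
      rw [show k + 1 = (k - 1 + 1) + 1 from by omega, Finset.prod_range_succ,
        Finset.prod_range_succ']
      rw [show k - 1 + 1 = k from by omega]
      have h0 : ((0 : ℕ) : ℂ) * x₀ + ((k - 0 : ℕ) : ℂ) * x₁ = (k : ℂ) * x₁ := by
        norm_num
      have hkk : ((k : ℕ) : ℂ) * x₀ + ((k - k : ℕ) : ℂ) * x₁ = (k : ℂ) * x₀ := by
        simp
      rw [h0, hkk]
    have hQr : Q = ∏ i ∈ Finset.range (k - 1),
        (Polynomial.C (((i + 1 : ℕ)) : ℂ) * Polynomial.X +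
          Polynomial.C ((k - (i + 1) : ℕ) : ℂ)) := by
      rw [hQ, show Finset.Icc 1 (k - 1) = Finset.Ico 1 k from by
          rw [← Finset.Ico_add_one_right_eq_Icc]; congr 1; omega,
        Finset.prod_Ico_eq_prod_range]
      exact Finset.prod_congr rfl fun i _ => by rw [Nat.add_comm]
    have hhom : (∏ i ∈ Finset.range (k - 1),
          (((i + 1 : ℕ) : ℂ) * x₀ + ((k - (i + 1) : ℕ) : ℂ) * x₁))
        = ∑ a ∈ Finset.range k, Q.coeff a * (x₀ ^ a * x₁ ^ (k - 1 - a)) := by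
      have heval : ∀ i : ℕ, ((i + 1 : ℕ) : ℂ) * x₀ + ((k - (i + 1) : ℕ) : ℂ) * x₁
          = x₁ * Polynomial.eval (x₀ / x₁)
              (Polynomial.C (((i + 1 : ℕ)) : ℂ) * Polynomial.X +
                Polynomial.C ((k - (i + 1) : ℕ) : ℂ)) := by
        intro i
        simp only [Polynomial.eval_add, Polynomial.eval_mul, Polynomial.eval_C,
          Polynomial.eval_X]
        field_simp
      calc (∏ i ∈ Finset.range (k - 1),
              (((i + 1 : ℕ) : ℂ) * x₀ + ((k - (i + 1) : ℕ) : ℂ) * x₁))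
          = ∏ i ∈ Finset.range (k - 1), (x₁ * Polynomial.eval (x₀ / x₁)
              (Polynomial.C (((i + 1 : ℕ)) : ℂ) * Polynomial.X +
                Polynomial.C ((k - (i + 1) : ℕ) : ℂ))) :=
            Finset.prod_congr rfl fun i _ => heval i
        _ = x₁ ^ (k - 1) * Polynomial.eval (x₀ / x₁) Q := by
            rw [Finset.prod_mul_distrib, Finset.prod_const, Finset.card_range, hQr,
              Polynomial.eval_prod]
        _ = x₁ ^ (k - 1) * ∑ a ∈ Finset.range k, Q.coeff a * (x₀ / x₁) ^ a := by
            rw [Polynomial.eval_eq_sum_range' hQdeg]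
        _ = ∑ a ∈ Finset.range k, Q.coeff a * (x₀ ^ a * x₁ ^ (k - 1 - a)) := by
            rw [Finset.mul_sum]
            refine Finset.sum_congr rfl fun a ha => ?_
            have ha' : a ≤ k - 1 := by have := Finset.mem_range.mp ha; omega
            rw [div_pow, pow_sub₀ x₁ hx₁ ha']
            field_simp
    rw [hef, hhom, Finset.sum_mul, Finset.sum_mul, Finset.mul_sum, Finset.sum_div]
    refine Finset.sum_congr rfl fun a ha => ?_
    have hak : a < k := Finset.mem_range.mp ha
    have e2 : x₁ ^ (k - 1 - a) = x₁ ^ ((k : ℤ) - 1 - (a : ℤ)) := by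
      rw [← zpow_natCast]
      congr 1
      omega
    have e3 : x₀ ^ a = x₀ ^ ((a : ℤ)) := (zpow_natCast x₀ a).symm
    have e4 : x₀ ^ N = x₀ ^ ((N : ℤ)) := (zpow_natCast x₀ N).symm
    have e5 : x₁ ^ N = x₁ ^ ((N : ℤ)) := (zpow_natCast x₁ N).symm
    rw [e2, e3, e4, e5]
    have hx0c : x₀ ^ ((N : ℤ) - 2 - (m : ℤ)) * x₀ * x₀ ^ ((a : ℤ)) / x₀ ^ ((N : ℤ))
        = x₀ ^ ((a : ℤ) - 1 - (m : ℤ)) := by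
      rw [← zpow_add_one₀ hx₀, ← zpow_add₀ hx₀, ← zpow_sub₀ hx₀]
      congr 1
      ring
    have hx1c : x₁ ^ ((m : ℤ) - 1 + (N : ℤ) - (k : ℤ)) * x₁ * x₁ ^ ((k : ℤ) - 1 - (a : ℤ)) /
          x₁ ^ ((N : ℤ)) = x₁ ^ ((m : ℤ) - 1 - (a : ℤ)) := by
      rw [← zpow_add_one₀ hx₁, ← zpow_add₀ hx₁, ← zpow_sub₀ hx₁]
      congr 1
      ring
    calc x₀ ^ ((N : ℤ) - 2 - (m : ℤ)) * x₁ ^ ((m : ℤ) - 1 + (N : ℤ) - (k : ℤ)) *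
            (Q.coeff a * (x₀ ^ ((a : ℤ)) * x₁ ^ ((k : ℤ) - 1 - (a : ℤ))) * ((k : ℂ) * x₁) *
              ((k : ℂ) * x₀)) / (x₀ ^ ((N : ℤ)) * x₁ ^ ((N : ℤ)))
        = ((k : ℂ) ^ 2 * Q.coeff a) *
            ((x₀ ^ ((N : ℤ) - 2 - (m : ℤ)) * x₀ * x₀ ^ ((a : ℤ)) / x₀ ^ ((N : ℤ))) *
              (x₁ ^ ((m : ℤ) - 1 + (N : ℤ) - (k : ℤ)) * x₁ * x₁ ^ ((k : ℤ) - 1 - (a : ℤ)) /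
                x₁ ^ ((N : ℤ)))) := by ring
      _ = ((k : ℂ) ^ 2 * Q.coeff a) *
            (x₀ ^ ((a : ℤ) - 1 - (m : ℤ)) * x₁ ^ ((m : ℤ) - 1 - (a : ℤ))) := by
          rw [hx0c, hx1c]
  -- inner integral
  have h2pi : (2 * (Real.pi : ℂ) * Complex.I) ≠ 0 := by
    simp [Real.pi_ne_zero, Complex.I_ne_zero, Complex.ofReal_ne_zero]
  have houter : Set.EqOn
      (fun x₁ => ∮ x₀ in C(0, ε),
        x₀ ^ ((N : ℤ) - 2 - (m : ℤ)) * x₁ ^ ((m : ℤ) - 1 + (N : ℤ) - (k : ℤ)) *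
          eFun k 1 x₀ x₁ / (x₀ ^ N * x₁ ^ N))
      (fun x₁ => ((k : ℂ) ^ 2 * Q.coeff m * (2 * (Real.pi : ℂ) * Complex.I)) * x₁⁻¹)
      (Metric.sphere (0 : ℂ) (5 * ε)) := by
    intro x₁ hx₁mem
    have hx₁ : x₁ ≠ 0 := Metric.ne_of_mem_sphere hx₁mem (by positivity)
    dsimp only
    rw [circleIntegral.integral_congr hε.le
      (fun x₀ hx₀mem => hker x₀ x₁ (Metric.ne_of_mem_sphere hx₀mem hε.ne') hx₁)]
    rw [circleIntegral_finset_sum _ _ _ _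
      (fun a _ => circleIntegrable_const_mul_zpow _ _ _ _ _ hε)]
    have hterm : ∀ a ∈ Finset.range k,
        (∮ x₀ in C(0, ε), ((k : ℂ) ^ 2 * Q.coeff a) *
            (x₀ ^ ((a : ℤ) - 1 - (m : ℤ)) * x₁ ^ ((m : ℤ) - 1 - (a : ℤ))))
          = if a = m then ((k : ℂ) ^ 2 * Q.coeff m * (2 * (Real.pi : ℂ) * Complex.I)) * x₁⁻¹
            else 0 := by
      intro a _
      have hfun : (fun x₀ : ℂ => ((k : ℂ) ^ 2 * Q.coeff a) *
            (x₀ ^ ((a : ℤ) - 1 - (m : ℤ)) * x₁ ^ ((m : ℤ) - 1 - (a : ℤ))))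
          = fun x₀ : ℂ => (((k : ℂ) ^ 2 * Q.coeff a) * x₁ ^ ((m : ℤ) - 1 - (a : ℤ))) *
              x₀ ^ ((a : ℤ) - 1 - (m : ℤ)) := by
        funext x₀; ring
      rw [hfun, circleIntegral.integral_const_mul, circleIntegral_zpow _ _ hε.ne']
      by_cases hma : a = m
      · subst hma
        rw [if_pos (by ring : (a : ℤ) - 1 - (a : ℤ) = -1), if_pos rfl,
          show ((a : ℤ) - 1 - (a : ℤ)) = -1 from by ring, zpow_neg_one]
        ring
      · rw [if_neg (by omega), if_neg hma, mul_zero]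
    rw [Finset.sum_congr rfl hterm, Finset.sum_ite_eq' (Finset.range k) m,
      if_pos (Finset.mem_range.mpr hmk)]
  rw [circleIntegral.integral_congr (by positivity) houter,
    circleIntegral.integral_const_mul]
  have hinv : (∮ z in C((0 : ℂ), 5 * ε), z⁻¹) = 2 * Real.pi * Complex.I := by
    have h := circleIntegral.integral_sub_center_inv (0 : ℂ)
      (show (5 * ε : ℝ) ≠ 0 from by positivity)
    simpa using h
  rw [hinv]
  -- compute L1
  have hL : ((L1 k (m : ℤ) : ℚ) : ℂ) = (k : ℂ) * Q.coeff m := by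
    have h1 : L1 k (m : ℤ) = (Polynomial.C (k : ℚ) *
        ∏ j ∈ Finset.Icc 1 (k - 1),
          (Polynomial.C (j : ℚ) * Polynomial.X + Polynomial.C ((k - j : ℕ) : ℚ))).coeff m := by
      simp [L1]
    rw [h1]
    have h2 : ∀ p : Polynomial ℚ, ((p.coeff m : ℚ) : ℂ)
        = (p.map (algebraMap ℚ ℂ)).coeff m := by
      intro p
      rw [Polynomial.coeff_map, eq_ratCast]
    rw [h2]
    have h3 : (Polynomial.C (k : ℚ) *
        ∏ j ∈ Finset.Icc 1 (k - 1),
          (Polynomial.C (j : ℚ) * Polynomial.X +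
            Polynomial.C ((k - j : ℕ) : ℚ))).map (algebraMap ℚ ℂ)
        = Polynomial.C (k : ℂ) * Q := by
      rw [hQ]
      simp only [Polynomial.map_mul, Polynomial.map_C, Polynomial.map_prod, Polynomial.map_add,
        Polynomial.map_X]
      norm_num [eq_ratCast]
    rw [h3, Polynomial.coeff_C_mul]
  rw [hL]
  have hkne : (k : ℂ) ≠ 0 := Nat.cast_ne_zero.mpr (by omega)
  field_simp
end

section
/- For every d ∈ {1,2,3}, all positive integers N, k, and every integer n, the virtual structure constants satisfy the reflection symmetry L̃_n^{N,k,d} = L̃_{N−1−(N−k)d−n}^{N,k,d}. -/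
/-!
The degree-one constants are the coefficients of `k ∏_{j=1}^{k-1} (j w + (k - j))`, a palindromic
polynomial of degree `k - 1`: reversing the factor `j w + (k - j)` gives the factor for `k - j`.
The higher constants are symmetric by descending induction on `N`. For `N ≥ 2k` the admissible
range of `n` is empty, so they vanish identically. Below that, each term of the recursion for
`L̃^{N,k,d}` at the reflected index `N - 1 - (N - k) d - n` is, by the symmetries of the constants
at `N + 1` and of `L̃^{N,k,1}`, the corresponding term at `n`.
-/

open Polynomial

def IsSymmetricAbout {α : Type*} (f : ℤ → α) (c : ℤ) : Prop :=
  ∀ n, f n = f (c - n)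

namespace IsSymmetricAbout

variable {α : Type*} {f : ℤ → α} {c : ℤ}

theorem apply_eq (h : IsSymmetricAbout f c) (a b : ℤ) (hab : a + b = c) : f a = f b := by
  rw [h a, ← hab, add_sub_cancel_left]

theorem of_eq_zero [Zero α] (hc : c < 0) (hf : ∀ n, n < 0 ∨ c < n → f n = 0) :
    IsSymmetricAbout f c := fun n => by
  rw [hf n (by omega), hf (c - n) (by omega)]

end IsSymmetricAbout

section Palindromic

variable {R : Type*}

theorem Polynomial.reflect_prod [CommSemiring R] {ι : Type*} (s : Finset ι) (f : ι → R[X])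
    (n : ι → ℕ) (hf : ∀ i ∈ s, (f i).natDegree ≤ n i) :
    reflect (∑ i ∈ s, n i) (∏ i ∈ s, f i) = ∏ i ∈ s, reflect (n i) (f i) := by
  classical
  induction s using Finset.induction_on with
  | empty => simp [reflect_one]
  | insert a s ha ih =>
    rw [Finset.forall_mem_insert] at hf
    have hprod : (∏ i ∈ s, f i).natDegree ≤ ∑ i ∈ s, n i :=
      (natDegree_prod_le s f).trans (Finset.sum_le_sum hf.2)
    rw [Finset.sum_insert ha, Finset.prod_insert ha, Finset.prod_insert ha,
      reflect_mul _ _ hf.1 hprod, ih hf.2]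

noncomputable def Polynomial.coeffInt [Semiring R] (p : R[X]) (n : ℤ) : R :=
  if 0 ≤ n then p.coeff n.toNat else 0

theorem Polynomial.isSymmetricAbout_coeffInt [Semiring R] {p : R[X]} {N : ℕ}
    (hdeg : p.natDegree ≤ N) (hp : reflect N p = p) : IsSymmetricAbout p.coeffInt N := by
  have hsymm : ∀ i ≤ N, p.coeff i = p.coeff (N - i) := fun i hi => by
    conv_lhs => rw [← hp]
    rw [coeff_reflect, revAt_le hi]
  have hzero : ∀ i, N < i → p.coeff i = 0 := fun i hi =>
    coeff_eq_zero_of_natDegree_lt (hdeg.trans_lt hi)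
  intro n
  unfold coeffInt
  split_ifs with hn hn' hn'
  · rw [hsymm n.toNat (by omega)]
    congr 1
    omega
  · exact hzero _ (by omega)
  · exact (hzero _ (by omega)).symm
  · rfl

theorem Polynomial.reflect_one_C_mul_X_add_C [Semiring R] (a b : R) :
    reflect 1 (C a * X + C b) = C b * X + C a := by
  rw [reflect_add, reflect_C_mul, reflect_one_X, reflect_C, pow_one, mul_one, add_comm]

end Palindromic

noncomputable def L1Poly (k : ℕ) : ℚ[X] :=
  C (k : ℚ) * ∏ j ∈ Finset.Icc 1 (k - 1), (C (j : ℚ) * X + C ((k - j : ℕ) : ℚ))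

theorem L1_eq_coeffInt (k : ℕ) : L1 k = (L1Poly k).coeffInt := rfl

theorem natDegree_L1Poly_le (k : ℕ) : (L1Poly k).natDegree ≤ k - 1 := by
  have hfactors : ∑ j ∈ Finset.Icc 1 (k - 1), (C (j : ℚ) * X + C ((k - j : ℕ) : ℚ)).natDegree
      ≤ ∑ _j ∈ Finset.Icc 1 (k - 1), 1 := Finset.sum_le_sum fun _ _ => natDegree_linear_le
  rw [Finset.sum_const, Nat.card_Icc, smul_eq_mul, mul_one, Nat.add_sub_cancel] at hfactors
  exact (natDegree_C_mul_le _ _).trans ((natDegree_prod_le _ _).trans hfactors)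

theorem reflect_L1Poly (k : ℕ) : reflect (k - 1) (L1Poly k) = L1Poly k := by
  have hprod := reflect_prod (Finset.Icc 1 (k - 1))
    (fun j => C (j : ℚ) * X + C ((k - j : ℕ) : ℚ)) (fun _ => 1) fun _ _ => natDegree_linear_le
  rw [Finset.sum_const, Nat.card_Icc, smul_eq_mul, mul_one, Nat.add_sub_cancel] at hprod
  rw [L1Poly, reflect_C_mul, hprod]
  simp only [reflect_one_C_mul_X_add_C]
  congr 1
  refine Finset.prod_nbij' (k - ·) (k - ·) ?_ ?_ ?_ ?_ fun j hj => ?_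
  iterate 4 (intro j hj; simp only [Finset.mem_Icc] at hj ⊢; omega)
  rw [Finset.mem_Icc] at hj
  rw [Nat.sub_sub_self (by omega)]

theorem L1_isSymmetricAbout (k : ℕ) : IsSymmetricAbout (L1 k) (k - 1) := by
  rcases Nat.eq_zero_or_pos k with rfl | hk
  · intro n
    simp [L1]
  · have h := isSymmetricAbout_coeffInt (natDegree_L1Poly_le k) (reflect_L1Poly k)
    rwa [Nat.cast_sub hk, Nat.cast_one, ← L1_eq_coeffInt] at h

section Recursions

variable {f g p h : ℤ → ℚ} {a d : ℤ}

theorem IsSymmetricAbout.of_rec2 (hf : IsSymmetricAbout f a) (hg : IsSymmetricAbout g (a - d - 1))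
    (hrec : ∀ m, h m / 2 = (1 / 2) * (g (m - 1) / 2) + (1 / 2) * (g m / 2)
      + (1 / 2) * f m * f (m + d)) :
    IsSymmetricAbout h (a - d) := fun m => by
  have hm := hrec m
  have hm' := hrec (a - d - m)
  rw [hg.apply_eq (a - d - m - 1) m (by ring), hg.apply_eq (a - d - m) (m - 1) (by ring),
    hf.apply_eq (a - d - m) (m + d) (by ring), hf.apply_eq (a - d - m + d) m (by ring)] at hm'
  linear_combination 2 * hm - 2 * hm'

theorem IsSymmetricAbout.of_rec3 (hf : IsSymmetricAbout f a) (hg : IsSymmetricAbout g (a - d - 1))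
    (hp : IsSymmetricAbout p (a - 2 * d - 2))
    (hrec : ∀ m, h m / 3 = (2 / 9) * (p (m - 2) / 3) + (5 / 9) * (p (m - 1) / 3)
      + (2 / 9) * (p m / 3)
      + (4 / 9) * (g (m - 1) / 2) * f (m + 2 * d)
      + (1 / 3) * (g m / 2) * f (m + 2 * d)
      + (2 / 9) * (g m / 2) * f (m + 1 + 2 * d)
      + (2 / 9) * f (m - 1) * (g (m - 1 + d) / 2)
      + (1 / 3) * f m * (g (m - 1 + d) / 2)
      + (4 / 9) * f m * (g (m + d) / 2)
      + (1 / 3) * f m * f (m + d) * f (m + 2 * d)) :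
    IsSymmetricAbout h (a - 2 * d) := fun m => by
  have hm := hrec m
  have hm' := hrec (a - 2 * d - m)
  rw [hp.apply_eq (a - 2 * d - m - 2) m (by ring), hp.apply_eq (a - 2 * d - m - 1) (m - 1) (by ring),
    hp.apply_eq (a - 2 * d - m) (m - 2) (by ring),
    hg.apply_eq (a - 2 * d - m - 1) (m + d) (by ring),
    hg.apply_eq (a - 2 * d - m) (m - 1 + d) (by ring),
    hg.apply_eq (a - 2 * d - m - 1 + d) m (by ring),
    hg.apply_eq (a - 2 * d - m + d) (m - 1) (by ring),
    hf.apply_eq (a - 2 * d - m + 2 * d) m (by ring),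
    hf.apply_eq (a - 2 * d - m + 1 + 2 * d) (m - 1) (by ring),
    hf.apply_eq (a - 2 * d - m - 1) (m + 1 + 2 * d) (by ring),
    hf.apply_eq (a - 2 * d - m) (m + 2 * d) (by ring),
    hf.apply_eq (a - 2 * d - m + d) (m + d) (by ring)] at hm'
  linear_combination 3 * hm - 3 * hm'

end Recursions

theorem stmt3_general (k : ℕ) (L2 L3 : ℕ → ℤ → ℚ)
    (hvan2 : ∀ (M : ℕ) (m : ℤ), 1 ≤ M →
      (m < 0 ∨ (M : ℤ) - 1 - ((M : ℤ) - (k : ℤ)) * 2 < m) → L2 M m = 0)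
    (hrec2 : ∀ (M : ℕ) (m : ℤ), 1 ≤ M →
      L2 M m / 2 = (1 / 2) * (L2 (M + 1) (m - 1) / 2) + (1 / 2) * (L2 (M + 1) m / 2)
        + (1 / 2) * L1 k m * L1 k (m + ((M : ℤ) - (k : ℤ))))
    (hvan3 : ∀ (M : ℕ) (m : ℤ), 1 ≤ M →
      (m < 0 ∨ (M : ℤ) - 1 - ((M : ℤ) - (k : ℤ)) * 3 < m) → L3 M m = 0)
    (hrec3 : ∀ (M : ℕ) (m : ℤ), 1 ≤ M →
      L3 M m / 3 = (2 / 9) * (L3 (M + 1) (m - 2) / 3) + (5 / 9) * (L3 (M + 1) (m - 1) / 3)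
        + (2 / 9) * (L3 (M + 1) m / 3)
        + (4 / 9) * (L2 (M + 1) (m - 1) / 2) * L1 k (m + 2 * ((M : ℤ) - (k : ℤ)))
        + (1 / 3) * (L2 (M + 1) m / 2) * L1 k (m + 2 * ((M : ℤ) - (k : ℤ)))
        + (2 / 9) * (L2 (M + 1) m / 2) * L1 k (m + 1 + 2 * ((M : ℤ) - (k : ℤ)))
        + (2 / 9) * L1 k (m - 1) * (L2 (M + 1) (m - 1 + ((M : ℤ) - (k : ℤ))) / 2)
        + (1 / 3) * L1 k m * (L2 (M + 1) (m - 1 + ((M : ℤ) - (k : ℤ))) / 2)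
        + (4 / 9) * L1 k m * (L2 (M + 1) (m + ((M : ℤ) - (k : ℤ))) / 2)
        + (1 / 3) * L1 k m * L1 k (m + ((M : ℤ) - (k : ℤ))) * L1 k (m + 2 * ((M : ℤ) - (k : ℤ)))) :
    ∀ (N : ℕ), 1 ≤ N → ∀ n : ℤ,
      L1 k n = L1 k ((N : ℤ) - 1 - ((N : ℤ) - (k : ℤ)) * 1 - n) ∧
      L2 N n = L2 N ((N : ℤ) - 1 - ((N : ℤ) - (k : ℤ)) * 2 - n) ∧
      L3 N n = L3 N ((N : ℤ) - 1 - ((N : ℤ) - (k : ℤ)) * 3 - n) := by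
  have hL1 := L1_isSymmetricAbout k
  have hsymm : ∀ j M : ℕ, 1 ≤ M → 2 * k ≤ M + j →
      IsSymmetricAbout (L2 M) (M - 1 - (M - k) * 2) ∧
        IsSymmetricAbout (L3 M) (M - 1 - (M - k) * 3) := by
    intro j
    induction j with
    | zero =>
      intro M hM hMk
      exact ⟨.of_eq_zero (by omega) (hvan2 M · hM), .of_eq_zero (by omega) (hvan3 M · hM)⟩
    | succ j ih =>
      intro M hM hMk
      obtain ⟨h2, h3⟩ := ih (M + 1) (by omega) (by omega)
      rw [show ((M + 1 : ℕ) : ℤ) - 1 - ((M + 1 : ℕ) - k) * 2 = k - 1 - (M - k) - 1 by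
        push_cast; ring] at h2
      rw [show ((M + 1 : ℕ) : ℤ) - 1 - ((M + 1 : ℕ) - k) * 3 = k - 1 - 2 * (M - k) - 2 by
        push_cast; ring] at h3
      rw [show (M : ℤ) - 1 - (M - k) * 2 = k - 1 - (M - k) by ring,
        show (M : ℤ) - 1 - (M - k) * 3 = k - 1 - 2 * (M - k) by ring]
      exact ⟨hL1.of_rec2 h2 (hrec2 M · hM), hL1.of_rec3 h2 h3 (hrec3 M · hM)⟩
  intro N hN n
  obtain ⟨h2, h3⟩ := hsymm (2 * k) N hN (by omega)
  exact ⟨hL1.apply_eq _ _ (by ring), h2 n, h3 n⟩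

/-- Reflection symmetry `L̃_n^{N,k,d} = L̃_{N−1−(N−k)d−n}^{N,k,d}` for `d = 1, 2, 3`.
Here `L2 N n` and `L3 N n` play the roles of the virtual structure constants
`L̃_n^{N,k,2}` and `L̃_n^{N,k,3}`, uniquely determined by the vanishing conditions and
recursions below (with `L̃_n^{N,k,1} = L1 k n`, independent of `N`). -/
theorem stmt3 (k : ℕ) (hk : 1 ≤ k) (L2 L3 : ℕ → ℤ → ℚ)
    (hvan2 : ∀ (M : ℕ) (m : ℤ), 1 ≤ M →
      (m < 0 ∨ (M : ℤ) - 1 - ((M : ℤ) - (k : ℤ)) * 2 < m) → L2 M m = 0)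
    (hrec2 : ∀ (M : ℕ) (m : ℤ), 1 ≤ M →
      L2 M m / 2 = (1 / 2) * (L2 (M + 1) (m - 1) / 2) + (1 / 2) * (L2 (M + 1) m / 2)
        + (1 / 2) * L1 k m * L1 k (m + ((M : ℤ) - (k : ℤ))))
    (hvan3 : ∀ (M : ℕ) (m : ℤ), 1 ≤ M →
      (m < 0 ∨ (M : ℤ) - 1 - ((M : ℤ) - (k : ℤ)) * 3 < m) → L3 M m = 0)
    (hrec3 : ∀ (M : ℕ) (m : ℤ), 1 ≤ M →
      L3 M m / 3 = (2 / 9) * (L3 (M + 1) (m - 2) / 3) + (5 / 9) * (L3 (M + 1) (m - 1) / 3)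
        + (2 / 9) * (L3 (M + 1) m / 3)
        + (4 / 9) * (L2 (M + 1) (m - 1) / 2) * L1 k (m + 2 * ((M : ℤ) - (k : ℤ)))
        + (1 / 3) * (L2 (M + 1) m / 2) * L1 k (m + 2 * ((M : ℤ) - (k : ℤ)))
        + (2 / 9) * (L2 (M + 1) m / 2) * L1 k (m + 1 + 2 * ((M : ℤ) - (k : ℤ)))
        + (2 / 9) * L1 k (m - 1) * (L2 (M + 1) (m - 1 + ((M : ℤ) - (k : ℤ))) / 2)
        + (1 / 3) * L1 k m * (L2 (M + 1) (m - 1 + ((M : ℤ) - (k : ℤ))) / 2)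
        + (4 / 9) * L1 k m * (L2 (M + 1) (m + ((M : ℤ) - (k : ℤ))) / 2)
        + (1 / 3) * L1 k m * L1 k (m + ((M : ℤ) - (k : ℤ))) * L1 k (m + 2 * ((M : ℤ) - (k : ℤ)))) :
    ∀ (N : ℕ), 1 ≤ N → ∀ n : ℤ,
      L1 k n = L1 k ((N : ℤ) - 1 - ((N : ℤ) - (k : ℤ)) * 1 - n) ∧
      L2 N n = L2 N ((N : ℤ) - 1 - ((N : ℤ) - (k : ℤ)) * 2 - n) ∧
      L3 N n = L3 N ((N : ℤ) - 1 - ((N : ℤ) - (k : ℤ)) * 3 - n) :=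
  stmt3_general k L2 L3 hvan2 hrec2 hvan3 hrec3
end

section
/- For all nonnegative integers a, b, the polynomial identity (x₂−x₁)(x₂−x₃)·(w_a(x₁,x₂)+w_a(x₂,x₃))·(w_b(x₁,x₂)+w_b(x₂,x₃)) = (x₁^a − x₃^a)(x₃^b − x₁^b) + (2x₂−x₁−x₃)·[ (x₂−x₁)·w_a(x₁,x₂)·w_b(x₁,x₂) + (x₂−x₃)·w_a(x₂,x₃)·w_b(x₂,x₃) ] holds in ℤ[x₁,x₂,x₃]. -/
/-- `w_a(u,v) := Σ_{p+q=a−1, p,q≥0} u^p v^q`. -/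
def wPair {R : Type*} [CommRing R] (a : ℕ) (u v : R) : R :=
  ∑ p ∈ Finset.range a, u ^ p * v ^ (a - 1 - p)

lemma wPair_mul_sub {R : Type*} [CommRing R] (a : ℕ) (u v : R) :
    wPair a u v * (u - v) = u ^ a - v ^ a := by
  simpa [wPair] using geom_sum₂_mul u v a

/-- Decomposition (dec2) of the paper, as an identity in any commutative ring. -/
theorem stmt8 (a b : ℕ) {R : Type*} [CommRing R] (x₁ x₂ x₃ : R) :
    (x₂ - x₁) * (x₂ - x₃) * (wPair a x₁ x₂ + wPair a x₂ x₃) *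
        (wPair b x₁ x₂ + wPair b x₂ x₃) =
      (x₁ ^ a - x₃ ^ a) * (x₃ ^ b - x₁ ^ b)
        + (2 * x₂ - x₁ - x₃) *
          ((x₂ - x₁) * wPair a x₁ x₂ * wPair b x₁ x₂
            + (x₂ - x₃) * wPair a x₂ x₃ * wPair b x₂ x₃) := by
  have h1a : (x₂ - x₁) * wPair a x₁ x₂ = x₂ ^ a - x₁ ^ a := by
    linear_combination -(wPair_mul_sub a x₁ x₂)
  have h2a : (x₂ - x₃) * wPair a x₂ x₃ = x₂ ^ a - x₃ ^ a := by
    linear_combination wPair_mul_sub a x₂ x₃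
  have h1b : (x₂ - x₁) * wPair b x₁ x₂ = x₂ ^ b - x₁ ^ b := by
    linear_combination -(wPair_mul_sub b x₁ x₂)
  have h2b : (x₂ - x₃) * wPair b x₂ x₃ = x₂ ^ b - x₃ ^ b := by
    linear_combination wPair_mul_sub b x₂ x₃
  linear_combination
    ((x₂ - x₃) * wPair b x₂ x₃ - (x₂ - x₁) * wPair b x₁ x₂) * h1a +
    ((x₂ - x₁) * wPair b x₁ x₂ - (x₂ - x₃) * wPair b x₂ x₃) * h2a +
    ((x₂ ^ a - x₃ ^ a) - (x₂ ^ a - x₁ ^ a)) * h1b +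
    ((x₂ ^ a - x₁ ^ a) - (x₂ ^ a - x₃ ^ a)) * h2b
end

section
/- For all nonnegative integers a, b, the polynomial identity (x₂−x₁)(x₂−x₃)·(2w_a(x₁,x₂)+w_a(x₂,x₃))·(2w_b(x₁,x₂)+w_b(x₂,x₃)) = 2·(x₁^a − x₃^a)(x₃^b − x₁^b) + r₁·[ 4(x₂−x₁)·w_a(x₁,x₂)·w_b(x₁,x₂) + 2(x₂−x₃)·w_a(x₂,x₃)·w_b(x₂,x₃) ] holds in ℚ[x₁,x₂,x₃], where r₁ := (x₂−x₁)/2 + (x₂−x₃). -/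
lemma wPair_key (n : ℕ) (u v : ℚ) : (u - v) * wPair n u v = u ^ n - v ^ n := by
  rw [wPair, mul_comm]; exact geom_sum₂_mul u v n

/-- Decomposition (dec3) of the paper, as a polynomial identity over `ℚ`
(with `r₁ := (x₂−x₁)/2 + (x₂−x₃)`). -/
theorem stmt9 (a b : ℕ) (x₁ x₂ x₃ : ℚ) :
    (x₂ - x₁) * (x₂ - x₃) * (2 * wPair a x₁ x₂ + wPair a x₂ x₃) *
        (2 * wPair b x₁ x₂ + wPair b x₂ x₃) =
      2 * ((x₁ ^ a - x₃ ^ a) * (x₃ ^ b - x₁ ^ b))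
        + ((x₂ - x₁) / 2 + (x₂ - x₃)) *
          (4 * (x₂ - x₁) * wPair a x₁ x₂ * wPair b x₁ x₂
            + 2 * (x₂ - x₃) * wPair a x₂ x₃ * wPair b x₂ x₃) := by
  have hA := wPair_key a x₁ x₂
  have hA' := wPair_key a x₂ x₃
  have hB := wPair_key b x₁ x₂
  have hB' := wPair_key b x₂ x₃
  linear_combination 2*(-(x₂-x₃)*wPair b x₂ x₃ - (x₁-x₂)*wPair b x₁ x₂) * (hA' + hA)
    - 2*(x₁^a - x₃^a)*(hB + hB')
end

section
/- For all nonnegative integers a, b, the following polynomial identity holds in ℚ[x₁,x₂,x₃,x₄], where r₁ := 2x₂−x₁−x₃ and r₂ := 2x₃−x₂−x₄: (x₂−x₁)(x₃−x₄)·(w_a(x₁,x₂)+w_a(x₂,x₃)+w_a(x₃,x₄))·(w_b(x₁,x₂)+w_b(x₂,x₃)+w_b(x₃,x₄)) = (x₁^a−x₄^a)(x₄^b−x₁^b) + r₂·[ 2(x₃−x₁)·w_a(x₁,x₃)·w_b(x₁,x₃) + (x₃−x₄)·w_a(x₃,x₄)·w_b(x₃,x₄) ] + r₁·[ 2(x₂−x₄)·w_a(x₂,x₄)·w_b(x₂,x₄)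 + (x₂−x₁)·w_a(x₁,x₂)·w_b(x₁,x₂) ] + r₁·r₂·[ (1/2)·( w_a(x₁,x₂)w_b(x₁,x₂) + w_a(x₃,x₄)w_b(x₃,x₄) + w_a(x₁,x₂)w_b(x₂,x₃) + w_a(x₂,x₃)w_b(x₁,x₂) + w_a(x₂,x₃)w_b(x₃,x₄) + w_a(x₃,x₄)w_b(x₂,x₃) ) + (x₃−x₁)·( w_a(x₁,x₃)·w_b(x₁,x₂,x₃) + w_a(x₁,x₂,x₃)·w_b(x₁,x₃) + (1/2)·r₁·w_a(x₁,x₂,x₃)·w_b(x₁,x₂,x₃) ) + (x₂−x₄)·( w_a(x₂,x₄)·w_b(x₂,x₃,x₄) + w_a(x₂,x₃,x₄)·w_b(x₂,x₄) + (1/2)·r₂·w_a(x₂,x₃,x₄)·w_b(x₂,x₃,x₄) ) ]. -/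
/-- `w_a(u,v,w) := Σ_{p+q+r=a−2, p,q,r≥0} u^p v^q w^r`. -/
def wTriple {R : Type*} [CommRing R] (a : ℕ) (u v w : R) : R :=
  ∑ p ∈ Finset.range (a - 1), ∑ q ∈ Finset.range (a - 1 - p),
    u ^ p * v ^ q * w ^ (a - 2 - p - q)

lemma wPair_comm (a : ℕ) (u v : ℚ) : wPair a u v = wPair a v u := by
  unfold wPair
  rw [← Finset.sum_range_reflect]
  refine Finset.sum_congr rfl fun p hp => ?_
  have hp' : p < a := Finset.mem_range.mp hp
  have h1 : a - 1 - (a - 1 - p) = p := by omega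
  rw [h1]; ring

lemma wPair_mul_sub_s11 (m : ℕ) (v w : ℚ) : (v - w) * wPair m v w = v ^ m - w ^ m := by
  rw [mul_comm]; exact geom_sum₂_mul v w m

lemma wTriple_eq (a : ℕ) (u v w : ℚ) :
    wTriple a u v w = ∑ p ∈ Finset.range (a - 1), u ^ p * wPair (a - 1 - p) v w := by
  unfold wTriple wPair
  refine Finset.sum_congr rfl fun p hp => ?_
  rw [Finset.mul_sum]
  refine Finset.sum_congr rfl fun q hq => ?_
  have h1 : a - 2 - p - q = a - 1 - p - 1 - q := by omega
  rw [h1]; ring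

lemma wTriple_swap23 (a : ℕ) (u v w : ℚ) : wTriple a u v w = wTriple a u w v := by
  rw [wTriple_eq, wTriple_eq]
  exact Finset.sum_congr rfl fun p _ => by rw [wPair_comm]

lemma wtri_comm (n : ℕ) (f : ℕ → ℕ → ℚ) :
    (∑ p ∈ Finset.range n, ∑ q ∈ Finset.range (n - p), f p q)
      = ∑ p ∈ Finset.range n, ∑ q ∈ Finset.range (n - p), f q p := by
  rw [← Finset.sum_range_diag_flip n f, ← Finset.sum_range_diag_flip n (fun p q => f q p)]
  refine Finset.sum_congr rfl fun m hm => ?_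
  rw [← Finset.sum_range_reflect]
  refine Finset.sum_congr rfl fun k hk => ?_
  have hk' : k < m + 1 := Finset.mem_range.mp hk
  have h1 : m + 1 - 1 - k = m - k := by omega
  have h2 : m - (m - k) = k := by omega
  rw [h1, h2]

lemma wTriple_swap12 (a : ℕ) (u v w : ℚ) : wTriple a u v w = wTriple a v u w := by
  unfold wTriple
  rw [wtri_comm (a - 1) (fun p q => u ^ p * v ^ q * w ^ (a - 2 - p - q))]
  refine Finset.sum_congr rfl fun p hp => Finset.sum_congr rfl fun q hq => ?_
  have h : a - 2 - q - p = a - 2 - p - q := by omega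
  rw [h]; ring

lemma key1 (a : ℕ) (u v w : ℚ) :
    wPair a u v - wPair a u w = (v - w) * wTriple a u v w := by
  cases a with
  | zero => simp [wPair, wTriple]
  | succ n =>
    have hL : wPair (n+1) u v - wPair (n+1) u w
        = ∑ p ∈ Finset.range n, u ^ p * (v ^ (n - p) - w ^ (n - p)) := by
      unfold wPair
      rw [← Finset.sum_sub_distrib, Finset.sum_range_succ]
      have h0 : (n : ℕ) + 1 - 1 - n = 0 := by omega
      rw [h0]
      simp only [pow_zero, mul_one, sub_self, add_zero]
      refine Finset.sum_congr rfl fun p hp => ?_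
      have h1 : n + 1 - 1 - p = n - p := by omega
      rw [h1]; ring
    rw [hL, wTriple_eq, Finset.mul_sum]
    refine Finset.sum_congr rfl fun p hp => ?_
    have h1 : n + 1 - 1 - p = n - p := by omega
    rw [h1, ← wPair_mul_sub_s11 (n - p) v w]; ring

/-- Decomposition (dec5) of the paper, as a polynomial identity over `ℚ`
(with `r₁ := 2x₂−x₁−x₃` and `r₂ := 2x₃−x₂−x₄`). -/
theorem stmt11 (a b : ℕ) (x₁ x₂ x₃ x₄ : ℚ) :
    (x₂ - x₁) * (x₃ - x₄) *
        (wPair a x₁ x₂ + wPair a x₂ x₃ + wPair a x₃ x₄) *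
        (wPair b x₁ x₂ + wPair b x₂ x₃ + wPair b x₃ x₄) =
      (x₁ ^ a - x₄ ^ a) * (x₄ ^ b - x₁ ^ b)
        + (2 * x₃ - x₂ - x₄) *
          (2 * (x₃ - x₁) * wPair a x₁ x₃ * wPair b x₁ x₃
            + (x₃ - x₄) * wPair a x₃ x₄ * wPair b x₃ x₄)
        + (2 * x₂ - x₁ - x₃) *
          (2 * (x₂ - x₄) * wPair a x₂ x₄ * wPair b x₂ x₄
            + (x₂ - x₁) * wPair a x₁ x₂ * wPair b x₁ x₂)
        + (2 * x₂ - x₁ - x₃) * (2 * x₃ - x₂ - x₄) *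
          ((1 / 2) *
              (wPair a x₁ x₂ * wPair b x₁ x₂ + wPair a x₃ x₄ * wPair b x₃ x₄
                + wPair a x₁ x₂ * wPair b x₂ x₃ + wPair a x₂ x₃ * wPair b x₁ x₂
                + wPair a x₂ x₃ * wPair b x₃ x₄ + wPair a x₃ x₄ * wPair b x₂ x₃)
            + (x₃ - x₁) *
              (wPair a x₁ x₃ * wTriple b x₁ x₂ x₃ + wTriple a x₁ x₂ x₃ * wPair b x₁ x₃
                + (1 / 2) * (2 * x₂ - x₁ - x₃) * wTriple a x₁ x₂ x₃ * wTriple b x₁ x₂ x₃)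
            + (x₂ - x₄) *
              (wPair a x₂ x₄ * wTriple b x₂ x₃ x₄ + wTriple a x₂ x₃ x₄ * wPair b x₂ x₄
                + (1 / 2) * (2 * x₃ - x₂ - x₄) * wTriple a x₂ x₃ x₄ * wTriple b x₂ x₃ x₄)) := by
  have hA12 : wPair a x₁ x₂ = wPair a x₂ x₃ + (x₁ - x₃) * wTriple a x₁ x₂ x₃ := by
    linear_combination key1 a x₂ x₁ x₃ - wPair_comm a x₂ x₁ +
      (x₁ - x₃) * wTriple_swap12 a x₂ x₁ x₃
  have hB12 : wPair b x₁ x₂ = wPair b x₂ x₃ + (x₁ - x₃) * wTriple b x₁ x₂ x₃ := by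
    linear_combination key1 b x₂ x₁ x₃ - wPair_comm b x₂ x₁ +
      (x₁ - x₃) * wTriple_swap12 b x₂ x₁ x₃
  have hA13 : wPair a x₁ x₃ = wPair a x₂ x₃ + (x₁ - x₂) * wTriple a x₁ x₂ x₃ := by
    linear_combination key1 a x₃ x₁ x₂ - wPair_comm a x₃ x₁ + wPair_comm a x₃ x₂ +
      (x₁ - x₂) * wTriple_swap12 a x₃ x₁ x₂ + (x₁ - x₂) * wTriple_swap23 a x₁ x₃ x₂
  have hB13 : wPair b x₁ x₃ = wPair b x₂ x₃ + (x₁ - x₂) * wTriple b x₁ x₂ x₃ := by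
    linear_combination key1 b x₃ x₁ x₂ - wPair_comm b x₃ x₁ + wPair_comm b x₃ x₂ +
      (x₁ - x₂) * wTriple_swap12 b x₃ x₁ x₂ + (x₁ - x₂) * wTriple_swap23 b x₁ x₃ x₂
  have hA34 : wPair a x₃ x₄ = wPair a x₂ x₃ + (x₄ - x₂) * wTriple a x₂ x₃ x₄ := by
    linear_combination key1 a x₃ x₄ x₂ + wPair_comm a x₃ x₂ +
      (x₄ - x₂) * wTriple_swap23 a x₃ x₄ x₂ + (x₄ - x₂) * wTriple_swap12 a x₃ x₂ x₄
  have hB34 : wPair b x₃ x₄ = wPair b x₂ x₃ + (x₄ - x₂) * wTriple b x₂ x₃ x₄ := by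
    linear_combination key1 b x₃ x₄ x₂ + wPair_comm b x₃ x₂ +
      (x₄ - x₂) * wTriple_swap23 b x₃ x₄ x₂ + (x₄ - x₂) * wTriple_swap12 b x₃ x₂ x₄
  have hA24 : wPair a x₂ x₄ = wPair a x₂ x₃ + (x₄ - x₃) * wTriple a x₂ x₃ x₄ := by
    linear_combination key1 a x₂ x₄ x₃ + (x₄ - x₃) * wTriple_swap23 a x₂ x₄ x₃
  have hB24 : wPair b x₂ x₄ = wPair b x₂ x₃ + (x₄ - x₃) * wTriple b x₂ x₃ x₄ := by
    linear_combination key1 b x₂ x₄ x₃ + (x₄ - x₃) * wTriple_swap23 b x₂ x₄ x₃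
  have hPa : x₁ ^ a - x₄ ^ a = (x₁ - x₂) * wPair a x₁ x₂ + (x₂ - x₃) * wPair a x₂ x₃
      + (x₃ - x₄) * wPair a x₃ x₄ := by
    linear_combination (-1 : ℚ) * wPair_mul_sub_s11 a x₁ x₂ - wPair_mul_sub_s11 a x₂ x₃ -
      wPair_mul_sub_s11 a x₃ x₄
  have hPb : x₄ ^ b - x₁ ^ b = -((x₁ - x₂) * wPair b x₁ x₂ + (x₂ - x₃) * wPair b x₂ x₃
      + (x₃ - x₄) * wPair b x₃ x₄) := by
    linear_combination wPair_mul_sub_s11 b x₁ x₂ + wPair_mul_sub_s11 b x₂ x₃ + wPair_mul_sub_s11 b x₃ x₄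
  rw [hPa, hPb, hA12, hB12, hA13, hB13, hA34, hB34, hA24, hB24]
  ring
end

section
/- Let N ≥ 2 and k ≥ 1 be integers, a, b nonnegative integers, and let λ₁, …, λ_N be pairwise distinct complex numbers. Let R > 0 satisfy R > 3·max_j |λ_j|. Then (1/(2πi))²·∮_{|x₂|=5R} ∮_{|x₁|=R} e(k,1;x₁,x₂)·(x₁−x₂)²·w_a(x₁,x₂)·w_b(x₁,x₂) / ∏_{j=1}^{N} ( (x₁−λ_j)(x₂−λ_j) ) dx₁ dx₂ = Σ_{i≠j} E(k,1;i,j)·(λ_i−λ_j)²·w_a(λ_i,λ_j)·w_b(λ_i,λ_j) / ( V(N;i)·V(N;j) ), where the sum runs over ordered pairs (i,j) with 1 ≤ i,j ≤ N, i ≠ j. -/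
/-- `V(N;i) := ∏_{j≠i} (λ_j − λ_i)`. -/
noncomputable def Vfun {N : ℕ} (lam : Fin N → ℂ) (i : Fin N) : ℂ :=
  ∏ j ∈ Finset.univ.erase i, (lam j - lam i)

open Finset Metric Complex Lagrange Real

theorem Lagrange.inv_prod_sub_eq_sum_nodalWeight_mul_inv_sub {F ι : Type*} [Field F]
    [DecidableEq ι] {s : Finset ι} {v : ι → F} {x : F} (hvs : Set.InjOn v s) (hs : s.Nonempty)
    (hx : ∀ i ∈ s, x ≠ v i) :
    (∏ i ∈ s, (x - v i))⁻¹ = ∑ i ∈ s, nodalWeight s v i * (x - v i)⁻¹ := by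
  have h := eval_interpolate_not_at_node (1 : ι → F) hx
  simp only [interpolate_one hvs hs, Polynomial.eval_one, eval_nodal, Pi.one_apply,
    mul_one] at h
  exact inv_eq_of_mul_eq_one_right h.symm

theorem circleIntegral_div_prod_sub {ι : Type*} [Fintype ι] [DecidableEq ι] [Nonempty ι]
    {f : ℂ → ℂ} {c : ℂ} {r : ℝ} {v : ι → ℂ} (hf : DiffContOnCl ℂ f (ball c r))
    (hv : Function.Injective v) (hmem : ∀ i, v i ∈ ball c r) :
    (∮ z in C(c, r), f z / ∏ j, (z - v j)) =
      2 * π * I * ∑ i, nodalWeight univ v i * f (v i) := by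
  have hr : 0 ≤ r := (pos_of_mem_ball (hmem (Classical.arbitrary ι))).le
  have hne : ∀ z ∈ sphere c r, ∀ i, z ≠ v i := fun z hz i h =>
    (mem_ball.mp (hmem i)).ne (mem_sphere.mp (h ▸ hz))
  have hsplit : Set.EqOn (fun z => f z / ∏ j, (z - v j))
      (fun z => ∑ i, (z - v i)⁻¹ • (nodalWeight univ v i * f z)) (sphere c r) := by
    intro z hz
    simp only [div_eq_mul_inv, inv_prod_sub_eq_sum_nodalWeight_mul_inv_sub hv.injOn
      univ_nonempty fun i _ => hne z hz i, mul_sum, smul_eq_mul]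
    exact sum_congr rfl fun i _ => by ring
  have hint : ∀ i ∈ univ, CircleIntegrable (fun z => (z - v i)⁻¹ • (nodalWeight univ v i * f z))
      c r := fun i _ => ContinuousOn.circleIntegrable hr <|
    ((continuousOn_id.sub continuousOn_const).inv₀ fun z hz => sub_ne_zero.mpr (hne z hz i)).smul
      (continuousOn_const.mul (hf.continuousOn_ball.mono sphere_subset_closedBall))
  rw [circleIntegral.integral_congr hr hsplit, circleIntegral.integral_fun_sum hint, mul_sum]
  refine sum_congr rfl fun i _ => ?_
  have := (hf.const_smul (nodalWeight univ v i)).circleIntegral_sub_inv_smul (hmem i)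
  simpa only [Pi.smul_apply, smul_eq_mul] using this

theorem circleIntegral_circleIntegral_div_prod_sub_mul_sub {ι : Type*} [Fintype ι]
    [DecidableEq ι] [Nonempty ι] {P : ℂ → ℂ → ℂ} {c₁ c₂ : ℂ} {r₁ r₂ : ℝ} {v : ι → ℂ}
    (hP₁ : ∀ y, Differentiable ℂ (P · y)) (hP₂ : ∀ x, Differentiable ℂ (P x))
    (hv : Function.Injective v) (h₁ : ∀ i, v i ∈ ball c₁ r₁) (h₂ : ∀ i, v i ∈ ball c₂ r₂) :
    (∮ y in C(c₂, r₂), ∮ x in C(c₁, r₁), P x y / ∏ j, ((x - v j) * (y - v j))) =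
      (2 * π * I) ^ 2 *
        ∑ i, ∑ j, nodalWeight univ v i * nodalWeight univ v j * P (v i) (v j) := by
  have hinner : ∀ y, (∮ x in C(c₁, r₁), P x y / ∏ j, ((x - v j) * (y - v j))) =
      (2 * π * I * ∑ i, nodalWeight univ v i * P (v i) y) / ∏ j, (y - v j) := fun y => by
    -- no need to restrict `y` to the outer circle: `∏ j, (y - v j)` is a constant in `x`
    simp_rw [prod_mul_distrib, div_mul_eq_div_div_swap]
    rw [circleIntegral_div_prod_sub ((hP₁ y).div_const _).diffContOnCl hv h₁]
    simp only [mul_div_assoc, sum_div]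
  have hdiff : Differentiable ℂ (fun y => 2 * π * I * ∑ i, nodalWeight univ v i * P (v i) y) :=
    (Differentiable.fun_sum fun i _ => (hP₂ (v i)).const_mul _).const_mul _
  simp_rw [hinner]
  rw [circleIntegral_div_prod_sub hdiff.diffContOnCl hv h₂]
  simp only [mul_sum]
  rw [sum_comm]
  exact sum_congr rfl fun i _ => sum_congr rfl fun j _ => by ring

theorem nodalWeight_univ_eq_neg_one_pow_mul_inv_Vfun {N : ℕ} (lam : Fin N → ℂ) (i : Fin N) :
    nodalWeight univ lam i = (-1) ^ (N - 1) * (Vfun lam i)⁻¹ := by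
  rw [nodalWeight, Vfun, ← prod_inv_distrib]
  calc ∏ j ∈ univ.erase i, (lam i - lam j)⁻¹
      = ∏ j ∈ univ.erase i, (-1) * (lam j - lam i)⁻¹ :=
        prod_congr rfl fun j _ => by rw [← neg_sub, inv_neg, neg_one_mul]
    _ = (-1) ^ (N - 1) * ∏ j ∈ univ.erase i, (lam j - lam i)⁻¹ := by
        rw [prod_mul_distrib, prod_const, card_erase_of_mem (mem_univ i), card_univ,
          Fintype.card_fin]

theorem nodalWeight_mul_nodalWeight_eq_inv_Vfun_mul {N : ℕ} (lam : Fin N → ℂ) (i j : Fin N) :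
    nodalWeight univ lam i * nodalWeight univ lam j = (Vfun lam i * Vfun lam j)⁻¹ := by
  have hsign : ((-1 : ℂ) ^ (N - 1)) ^ 2 = 1 := by
    rw [← pow_mul, mul_comm, pow_mul, neg_one_sq, one_pow]
  rw [nodalWeight_univ_eq_neg_one_pow_mul_inv_Vfun, nodalWeight_univ_eq_neg_one_pow_mul_inv_Vfun,
    mul_inv]
  linear_combination (Vfun lam i)⁻¹ * (Vfun lam j)⁻¹ * hsign

theorem stmt14_general (N k : ℕ) (hN : 2 ≤ N) (a b : ℕ)
    (lam : Fin N → ℂ) (hdist : Function.Injective lam)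
    (R : ℝ) (hR3 : ∀ j, 3 * ‖lam j‖ < R) :
    (1 / (2 * (Real.pi : ℂ) * Complex.I)) ^ 2 *
      (∮ x₂ in C(0, 5 * R), ∮ x₁ in C(0, R),
        eFun k 1 x₁ x₂ * (x₁ - x₂) ^ 2 * wPair a x₁ x₂ * wPair b x₁ x₂ /
          ∏ j, ((x₁ - lam j) * (x₂ - lam j))) =
    ∑ i, ∑ j ∈ Finset.univ.erase i,
      eFun k 1 (lam i) (lam j) * (lam i - lam j) ^ 2 *
        wPair a (lam i) (lam j) * wPair b (lam i) (lam j) /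
        (Vfun lam i * Vfun lam j) := by
  have : Nonempty (Fin N) := ⟨⟨0, by omega⟩⟩
  have hball : ∀ j, lam j ∈ ball 0 R ∧ lam j ∈ ball 0 (5 * R) := fun j => by
    simp only [mem_ball_zero_iff]
    constructor <;> linarith [hR3 j, norm_nonneg (lam j)]
  rw [circleIntegral_circleIntegral_div_prod_sub_mul_sub
    (P := fun x y => eFun k 1 x y * (x - y) ^ 2 * wPair a x y * wPair b x y)
    (by unfold eFun wPair; fun_prop) (by unfold eFun wPair; fun_prop) hdist
    (fun j => (hball j).1) (fun j => (hball j).2), ← mul_assoc, ← mul_pow, one_div,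
    inv_mul_cancel₀ two_pi_I_ne_zero, one_pow, one_mul]
  refine sum_congr rfl fun i _ => ?_
  rw [← add_sum_erase _ _ (mem_univ i), sub_self, zero_pow two_ne_zero, mul_zero, zero_mul,
    zero_mul, mul_zero, zero_add]
  exact sum_congr rfl fun j _ => by
    rw [nodalWeight_mul_nodalWeight_eq_inv_Vfun_mul, div_eq_inv_mul]

/-- The double contour integral computing the `d = 1` Kontsevich localization sum:
`(1/(2πi))²·∮_{|x₂|=5R} ∮_{|x₁|=R} e(k,1;x₁,x₂)(x₁−x₂)² w_a w_b / ∏_j (x₁−λ_j)(x₂−λ_j)`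
equals `Σ_{i≠j} E(k,1;i,j)(λ_i−λ_j)² w_a(λ_i,λ_j) w_b(λ_i,λ_j)/(V(N;i)V(N;j))`. -/
theorem stmt14 (N k : ℕ) (hN : 2 ≤ N) (hk : 1 ≤ k) (a b : ℕ)
    (lam : Fin N → ℂ) (hdist : Function.Injective lam)
    (R : ℝ) (hR : 0 < R) (hR3 : ∀ j, 3 * ‖lam j‖ < R) :
    (1 / (2 * (Real.pi : ℂ) * Complex.I)) ^ 2 *
      (∮ x₂ in C(0, 5 * R), ∮ x₁ in C(0, R),
        eFun k 1 x₁ x₂ * (x₁ - x₂) ^ 2 * wPair a x₁ x₂ * wPair b x₁ x₂ /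
          ∏ j, ((x₁ - lam j) * (x₂ - lam j))) =
    ∑ i, ∑ j ∈ Finset.univ.erase i,
      eFun k 1 (lam i) (lam j) * (lam i - lam j) ^ 2 *
        wPair a (lam i) (lam j) * wPair b (lam i) (lam j) /
        (Vfun lam i * Vfun lam j) :=
  stmt14_general N k hN a b lam hdist R hR3
end

section
/- Let N ≥ 2 and k ≥ 1 be integers and a, b nonnegative integers with a + b = 2N − 3 − k. Let λ₁, …, λ_N be pairwise distinct complex numbers and R > 0 with R > 3·max_j |λ_j|. Then the double contour integral ∮_{|x₂|=5R} ∮_{|x₁|=R} e(k,1;x₁,x₂)·(x₁−x₂)²·w_a(x₁,x₂)·w_b(x₁,x₂) / ∏_{j=1}^{N} ( (x₁−λ_j)(x₂−λ_j) ) dx₁ dx₂ is independent of the λ_j; and it equals ∮_{|x₂|=5R} ∮_{|x₁|=R} e(k,1;x₁,x₂)·(x₁−x₂)²·w_a(x₁,x₂)·w_b(x₁,x₂) / ( x₁^N·x₂^N ) dx₁ dx₂ (its value when all λ_j = 0). -/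
/-!
Both denominators factor as `Q(x₁) Q(x₂)`, so each double integral is a combination, over the
monomials `x₁^p x₂^q` of the numerator, of products of moments `∮ z^p / Q(z) dz`. For
`Q = ∏ (z - λ_j)` with distinct `λ_j` inside the circle, partial fractions and Cauchy's formula
turn the moment into `2πi ∑_j w_j λ_j^p` with the barycentric weights `w_j`, and for `p < N` this
is `2πi` if `p = N - 1` and `0` otherwise, exactly as for `Q = z^N`. The numerator is homogeneous
of degree `a + b + k + 1 = 2N - 2`, so every monomial except `x₁^(N-1) x₂^(N-1)` has an exponent
below `N - 1`: both integrals equal `(2πi)²` times the coefficient of that monomial.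
-/

open Complex Metric Finset Real

section Lagrange

variable {ι : Type*} [Fintype ι] [DecidableEq ι]

theorem inv_prod_sub_eq_sum_nodalWeight [Nonempty ι] {v : ι → ℂ} (hv : Function.Injective v)
    {x : ℂ} (hx : ∀ j, x ≠ v j) :
    (∏ j, (x - v j))⁻¹ = ∑ j, Lagrange.nodalWeight univ v j * (x - v j)⁻¹ := by
  have h := Lagrange.eval_interpolate_not_at_node (s := univ) (v := v) 1 fun j _ => hx j
  rw [Lagrange.interpolate_one hv.injOn univ_nonempty, Polynomial.eval_one,
    Lagrange.eval_nodal] at h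
  simp only [Pi.one_apply, mul_one] at h
  exact inv_eq_of_mul_eq_one_right h.symm

theorem coeff_basis_card_sub_one (v : ι → ℂ) (i : ι) :
    (Lagrange.basis univ v i).coeff (Fintype.card ι - 1) = Lagrange.nodalWeight univ v i := by
  rw [Lagrange.basis_eq_prod_sub_inv_mul_nodal_div (mem_univ i),
    ← Lagrange.nodal_erase_eq_nodal_div (mem_univ i), Polynomial.coeff_C_mul]
  have hdeg : (Lagrange.nodal (univ.erase i) v).natDegree = Fintype.card ι - 1 := by
    rw [Lagrange.natDegree_nodal, card_erase_of_mem (mem_univ i), card_univ]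
  rw [← hdeg, Lagrange.nodal_monic.coeff_natDegree, mul_one]

/-- The nodal weights are the coefficients of `X ^ (card ι - 1)` in the Lagrange basis, and
interpolation reproduces `X ^ p` for `p < card ι`. -/
theorem sum_nodalWeight_mul_pow {v : ι → ℂ} (hv : Function.Injective v) {p : ℕ}
    (hp : p < Fintype.card ι) :
    ∑ j, Lagrange.nodalWeight univ v j * v j ^ p = if p + 1 = Fintype.card ι then 1 else 0 := by
  have hdeg : (Polynomial.X ^ p : Polynomial ℂ).degree < #(univ : Finset ι) := by
    rw [card_univ, Polynomial.degree_X_pow]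
    exact_mod_cast hp
  have h := congrArg (Polynomial.coeff · (Fintype.card ι - 1))
    (Lagrange.eq_interpolate hv.injOn hdeg)
  simp only [Lagrange.interpolate_apply, Polynomial.finsetSum_coeff, Polynomial.coeff_C_mul,
    Polynomial.eval_pow, Polynomial.eval_X, Polynomial.coeff_X_pow, coeff_basis_card_sub_one] at h
  simp_rw [mul_comm (Lagrange.nodalWeight univ v _), ← h]
  exact if_congr (by omega) rfl rfl

end Lagrange

section CircleIntegral

theorem circleIntegral_sum_const_mul {ι : Type*} (s : Finset ι) (a : ι → ℂ) (f : ι → ℂ → ℂ)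
    {c : ℂ} {r : ℝ} (hf : ∀ i ∈ s, CircleIntegrable (f i) c r) :
    (∮ z in C(c, r), ∑ i ∈ s, a i * f i z) = ∑ i ∈ s, a i * ∮ z in C(c, r), f i z := by
  have hf' : ∀ i ∈ s, CircleIntegrable (fun z => a i * f i z) c r := fun i hi =>
    (hf i hi).const_fun_smul
  rw [circleIntegral.integral_fun_sum hf']
  simp only [circleIntegral.integral_const_mul]

variable {ι : Type*} [Fintype ι] [DecidableEq ι]

theorem circleIntegral_mul_inv_prod_sub [Nonempty ι] {g : ℂ → ℂ} {c : ℂ} {r : ℝ}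
    (hg : DifferentiableOn ℂ g (closedBall c r)) {v : ι → ℂ} (hv : Function.Injective v)
    (hvr : ∀ j, v j ∈ ball c r) :
    (∮ z in C(c, r), g z * (∏ j, (z - v j))⁻¹) =
      2 * π * I * ∑ j, Lagrange.nodalWeight univ v j * g (v j) := by
  have hr : 0 ≤ r := dist_nonneg.trans (hvr (Classical.arbitrary ι)).le
  have hne : ∀ z ∈ sphere c r, ∀ j, z ≠ v j := fun z hz j hzj => by
    rw [hzj, mem_sphere] at hz
    exact (mem_ball.1 (hvr j)).ne hz
  have hpf : Set.EqOn (fun z => g z * (∏ j, (z - v j))⁻¹)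
      (fun z => ∑ j, Lagrange.nodalWeight univ v j * ((z - v j)⁻¹ * g z)) (sphere c r) :=
    fun z hz => by
      simp only [inv_prod_sub_eq_sum_nodalWeight hv (hne z hz), mul_sum]
      exact sum_congr rfl fun j _ => by ring
  have hintegrable : ∀ j ∈ univ, CircleIntegrable (fun z => (z - v j)⁻¹ * g z) c r := fun j _ =>
    ((continuousOn_id.sub continuousOn_const).inv₀ (fun z hz => sub_ne_zero.2 (hne z hz j))).mul
      (hg.continuousOn.mono sphere_subset_closedBall) |>.circleIntegrable hr
  rw [circleIntegral.integral_congr hr hpf, circleIntegral_sum_const_mul _ _ _ hintegrable,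
    mul_sum]
  refine sum_congr rfl fun j _ => ?_
  have hcauchy := hg.circleIntegral_sub_inv_smul (hvr j)
  simp only [smul_eq_mul] at hcauchy
  rw [hcauchy]
  ring

theorem circleIntegral_pow_mul_inv_prod_sub {v : ι → ℂ} (hv : Function.Injective v) {c : ℂ}
    {r : ℝ} (hvr : ∀ j, v j ∈ ball c r) {p : ℕ} (hp : p < Fintype.card ι) :
    (∮ z in C(c, r), z ^ p * (∏ j, (z - v j))⁻¹) =
      if p + 1 = Fintype.card ι then 2 * π * I else 0 := by
  have : Nonempty ι := Fintype.card_pos_iff.1 (by omega)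
  rw [circleIntegral_mul_inv_prod_sub (differentiable_pow p).differentiableOn hv hvr,
    sum_nodalWeight_mul_pow hv hp]
  split_ifs <;> simp

theorem circleIntegral_pow_mul_inv_pow {r : ℝ} (hr : 0 < r) (p N : ℕ) :
    (∮ z in C(0, r), z ^ p * (z ^ N)⁻¹) = if p + 1 = N then 2 * π * I else 0 := by
  have hzpow : Set.EqOn (fun z : ℂ => z ^ p * (z ^ N)⁻¹) (fun z => (z - 0) ^ ((p : ℤ) - N))
      (sphere 0 r) := fun z hz => by
    have hz0 : z ≠ 0 := ne_zero_of_mem_sphere hr.ne' ⟨z, hz⟩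
    simp [zpow_sub₀ hz0, div_eq_mul_inv]
  rw [circleIntegral.integral_congr hr.le hzpow]
  split_ifs with h
  · simp_rw [show (p : ℤ) - N = -1 by omega, zpow_neg_one]
    exact circleIntegral.integral_sub_center_inv 0 hr.ne'
  · exact circleIntegral.integral_sub_zpow_of_ne (by omega) 0 0 r

end CircleIntegral

section TwoVariables

open MvPolynomial

theorem MvPolynomial.eval_fin_two {R : Type*} [CommSemiring R] (P : MvPolynomial (Fin 2) R)
    (u v : R) : eval ![u, v] P = ∑ d ∈ P.support, P.coeff d * (u ^ d 0 * v ^ d 1) := by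
  simp [eval_eq', Fin.prod_univ_two]

theorem circleIntegral_circleIntegral_eval_mul (P : MvPolynomial (Fin 2) ℂ) {g₁ g₂ : ℂ → ℂ}
    {r₁ r₂ : ℝ} (hr₁ : 0 ≤ r₁) (hr₂ : 0 ≤ r₂) (hg₁ : ContinuousOn g₁ (sphere 0 r₁))
    (hg₂ : ContinuousOn g₂ (sphere 0 r₂)) :
    (∮ x₂ in C(0, r₂), ∮ x₁ in C(0, r₁), eval ![x₁, x₂] P * (g₁ x₁ * g₂ x₂)) =
      ∑ d ∈ P.support, P.coeff d *
        ((∮ z in C(0, r₁), z ^ d 0 * g₁ z) * ∮ z in C(0, r₂), z ^ d 1 * g₂ z) := by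
  have hintegrable : ∀ {g : ℂ → ℂ} {r : ℝ}, 0 ≤ r → ContinuousOn g (sphere 0 r) → ∀ n : ℕ,
      CircleIntegrable (fun z => z ^ n * g z) 0 r := fun hr hg n =>
    ((continuous_pow n).continuousOn.mul hg).circleIntegrable hr
  have hinner : ∀ x₂, (∮ x₁ in C(0, r₁), eval ![x₁, x₂] P * (g₁ x₁ * g₂ x₂)) =
      ∑ d ∈ P.support, (P.coeff d * ∮ z in C(0, r₁), z ^ d 0 * g₁ z) * (x₂ ^ d 1 * g₂ x₂) := by
    intro x₂
    have hexpand : ∀ x₁, eval ![x₁, x₂] P * (g₁ x₁ * g₂ x₂) =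
        ∑ d ∈ P.support, (P.coeff d * (x₂ ^ d 1 * g₂ x₂)) * (x₁ ^ d 0 * g₁ x₁) := fun x₁ => by
      rw [eval_fin_two, sum_mul]
      exact sum_congr rfl fun d _ => by ring
    simp only [hexpand]
    rw [circleIntegral_sum_const_mul _ _ _ fun d _ => hintegrable hr₁ hg₁ (d 0)]
    exact sum_congr rfl fun d _ => by ring
  simp only [hinner]
  rw [circleIntegral_sum_const_mul _ _ _ fun d _ => hintegrable hr₂ hg₂ (d 1)]
  exact sum_congr rfl fun d _ => by ring

/-- Every monomial of degree `2 (N - 1)` other than `x₁ ^ (N - 1) x₂ ^ (N - 1)` has an exponent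
below `N - 1`. -/
theorem sum_coeff_mul_eq_coeff {R : Type*} [CommSemiring R] {P : MvPolynomial (Fin 2) R}
    {N : ℕ} (hN : 0 < N) (hP : P.IsHomogeneous (2 * (N - 1))) {c₁ c₂ : ℕ → R} {κ : R}
    (hc₁ : ∀ p < N, c₁ p = if p + 1 = N then κ else 0)
    (hc₂ : ∀ p < N, c₂ p = if p + 1 = N then κ else 0) :
    ∑ d ∈ P.support, P.coeff d * (c₁ (d 0) * c₂ (d 1)) =
      κ ^ 2 * P.coeff (Finsupp.single 0 (N - 1) + Finsupp.single 1 (N - 1)) := by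
  set corner : Fin 2 →₀ ℕ := Finsupp.single 0 (N - 1) + Finsupp.single 1 (N - 1)
  have hdeg : ∀ d ∈ P.support, d 0 + d 1 = 2 * (N - 1) := fun d hd => by
    simpa [Finsupp.weight_apply, Finsupp.sum_fintype, Fin.sum_univ_two] using
      hP (mem_support_iff.1 hd)
  have hcorner₀ : corner 0 = N - 1 := by simp [corner]
  have hcorner₁ : corner 1 = N - 1 := by simp [corner]
  rw [sum_eq_single corner]
  · rw [hcorner₀, hcorner₁, hc₁ _ (by omega), hc₂ _ (by omega), if_pos (by omega), sq, mul_comm]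
  · intro d hd hne
    rcases lt_or_ge (d 0) (N - 1) with h0 | h0
    · rw [hc₁ _ (by omega), if_neg (by omega)]
      simp
    rcases lt_or_ge (d 1) (N - 1) with h1 | h1
    · rw [hc₂ _ (by omega), if_neg (by omega)]
      simp
    have := hdeg d hd
    refine absurd ?_ hne
    ext i
    fin_cases i <;> simp only [Fin.zero_eta, Fin.mk_one, hcorner₀, hcorner₁] <;> omega
  · intro h
    rw [notMem_support_iff.1 h, zero_mul]

theorem circleIntegral_circleIntegral_eval_div_prod_sub {N : ℕ} (hN : 0 < N)
    {P : MvPolynomial (Fin 2) ℂ} (hP : P.IsHomogeneous (2 * (N - 1))) {v : Fin N → ℂ}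
    (hv : Function.Injective v) {r₁ r₂ : ℝ} (hv₁ : ∀ j, ‖v j‖ < r₁) (hv₂ : ∀ j, ‖v j‖ < r₂) :
    (∮ x₂ in C(0, r₂), ∮ x₁ in C(0, r₁), eval ![x₁, x₂] P / ∏ j, ((x₁ - v j) * (x₂ - v j))) =
      (2 * π * I) ^ 2 * P.coeff (Finsupp.single 0 (N - 1) + Finsupp.single 1 (N - 1)) := by
  have hr : ∀ {r : ℝ}, (∀ j, ‖v j‖ < r) → 0 ≤ r := fun h => (norm_nonneg _).trans (h ⟨0, hN⟩).le
  have hcont : ∀ {r : ℝ}, (∀ j, ‖v j‖ < r) →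
      ContinuousOn (fun z => (∏ j, (z - v j))⁻¹) (sphere 0 r) := fun h =>
    (continuousOn_finsetProd _ fun j _ => continuousOn_id.sub continuousOn_const).inv₀
      fun z hz => prod_ne_zero_iff.2 fun j _ => sub_ne_zero.2 fun (hzj : z = v j) => by
        rw [hzj, mem_sphere_zero_iff_norm] at hz
        exact (h j).ne hz
  have hmoment : ∀ {r : ℝ}, (∀ j, ‖v j‖ < r) → ∀ p < N,
      (∮ z in C(0, r), z ^ p * (∏ j, (z - v j))⁻¹) = if p + 1 = N then 2 * π * I else 0 :=
    fun h p hp => by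
      simpa using circleIntegral_pow_mul_inv_prod_sub hv (fun j => mem_ball_zero_iff.2 (h j))
        (p := p) (by simpa using hp)
  simp only [prod_mul_distrib, div_eq_mul_inv, mul_inv]
  rw [circleIntegral_circleIntegral_eval_mul P (hr hv₁) (hr hv₂) (hcont hv₁) (hcont hv₂),
    sum_coeff_mul_eq_coeff hN hP (hmoment hv₁) (hmoment hv₂)]

theorem circleIntegral_circleIntegral_eval_div_pow {N : ℕ} (hN : 0 < N)
    {P : MvPolynomial (Fin 2) ℂ} (hP : P.IsHomogeneous (2 * (N - 1))) {r₁ r₂ : ℝ}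
    (hr₁ : 0 < r₁) (hr₂ : 0 < r₂) :
    (∮ x₂ in C(0, r₂), ∮ x₁ in C(0, r₁), eval ![x₁, x₂] P / (x₁ ^ N * x₂ ^ N)) =
      (2 * π * I) ^ 2 * P.coeff (Finsupp.single 0 (N - 1) + Finsupp.single 1 (N - 1)) := by
  have hcont : ∀ {r : ℝ}, 0 < r → ContinuousOn (fun z : ℂ => (z ^ N)⁻¹) (sphere 0 r) :=
    fun hr => (continuous_pow N).continuousOn.inv₀ fun z hz =>
      pow_ne_zero N (ne_zero_of_mem_sphere hr.ne' ⟨z, hz⟩)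
  simp only [div_eq_mul_inv, mul_inv]
  rw [circleIntegral_circleIntegral_eval_mul P hr₁.le hr₂.le (hcont hr₁) (hcont hr₂),
    sum_coeff_mul_eq_coeff hN hP (fun p _ => circleIntegral_pow_mul_inv_pow hr₁ p N)
      (fun p _ => circleIntegral_pow_mul_inv_pow hr₂ p N)]

end TwoVariables

section Numerator

open MvPolynomial

theorem MvPolynomial.isHomogeneous_wPair {σ R : Type*} [CommRing R] (a : ℕ) (i j : σ) :
    (wPair a (X i) (X j) : MvPolynomial σ R).IsHomogeneous (a - 1) :=
  IsHomogeneous.sum _ _ _ fun p hp => by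
    convert (isHomogeneous_X_pow i p).mul (isHomogeneous_X_pow j (a - 1 - p)) using 1
    have := mem_range.1 hp
    omega

noncomputable def numeratorPoly (k a b : ℕ) : MvPolynomial (Fin 2) ℂ :=
  (∏ m ∈ range (k + 1), (C (m : ℂ) * X 0 + C ((k - m : ℕ) : ℂ) * X 1)) * (X 0 - X 1) ^ 2 *
    wPair a (X 0) (X 1) * wPair b (X 0) (X 1)

theorem eval_numeratorPoly (k a b : ℕ) (u v : ℂ) :
    eval ![u, v] (numeratorPoly k a b) =
      eFun k 1 u v * (u - v) ^ 2 * wPair a u v * wPair b u v := by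
  simp [numeratorPoly, eFun, wPair, map_prod, map_sum]

theorem isHomogeneous_numeratorPoly (k a b : ℕ) :
    (numeratorPoly k a b).IsHomogeneous (a + b + k + 1) := by
  rcases Nat.eq_zero_or_pos a with rfl | ha
  · simpa [numeratorPoly, wPair] using isHomogeneous_zero _ _ _
  rcases Nat.eq_zero_or_pos b with rfl | hb
  · simpa [numeratorPoly, wPair] using isHomogeneous_zero _ _ _
  have hlinear : ∀ m ∈ range (k + 1),
      (C (m : ℂ) * X 0 + C ((k - m : ℕ) : ℂ) * X 1 : MvPolynomial (Fin 2) ℂ).IsHomogeneous 1 :=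
    fun m _ => ((isHomogeneous_X ℂ 0).C_mul _).add ((isHomogeneous_X ℂ 1).C_mul _)
  rw [show a + b + k + 1 = (∑ _m ∈ range (k + 1), 1) + 1 * 2 + (a - 1) + (b - 1) by simp; omega]
  exact (((IsHomogeneous.prod _ _ _ hlinear).mul
    (((isHomogeneous_X ℂ 0).sub (isHomogeneous_X ℂ 1)).pow 2)).mul
      (isHomogeneous_wPair a 0 1)).mul (isHomogeneous_wPair b 0 1)

end Numerator

theorem stmt17_general (N k : ℕ) (a b : ℕ)
    (hab : (a : ℤ) + (b : ℤ) = 2 * (N : ℤ) - 3 - (k : ℤ))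
    (lam : Fin N → ℂ) (hdist : Function.Injective lam)
    (R : ℝ) (hR : 0 < R) (hR3 : ∀ j, 3 * ‖lam j‖ < R) :
    (∀ mu : Fin N → ℂ, Function.Injective mu → (∀ j, 3 * ‖mu j‖ < R) →
      (∮ x₂ in C(0, 5 * R), ∮ x₁ in C(0, R),
        eFun k 1 x₁ x₂ * (x₁ - x₂) ^ 2 * wPair a x₁ x₂ * wPair b x₁ x₂ /
          ∏ j, ((x₁ - lam j) * (x₂ - lam j))) =
      (∮ x₂ in C(0, 5 * R), ∮ x₁ in C(0, R),
        eFun k 1 x₁ x₂ * (x₁ - x₂) ^ 2 * wPair a x₁ x₂ * wPair b x₁ x₂ /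
          ∏ j, ((x₁ - mu j) * (x₂ - mu j)))) ∧
    (∮ x₂ in C(0, 5 * R), ∮ x₁ in C(0, R),
      eFun k 1 x₁ x₂ * (x₁ - x₂) ^ 2 * wPair a x₁ x₂ * wPair b x₁ x₂ /
        ∏ j, ((x₁ - lam j) * (x₂ - lam j))) =
    (∮ x₂ in C(0, 5 * R), ∮ x₁ in C(0, R),
      eFun k 1 x₁ x₂ * (x₁ - x₂) ^ 2 * wPair a x₁ x₂ * wPair b x₁ x₂ /
        (x₁ ^ N * x₂ ^ N)) := by
  have hN₀ : 0 < N := by omega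
  have hP : (numeratorPoly k a b).IsHomogeneous (2 * (N - 1)) := by
    convert isHomogeneous_numeratorPoly k a b using 1
    omega
  have hnodes : ∀ v : Fin N → ℂ, Function.Injective v → (∀ j, 3 * ‖v j‖ < R) →
      (∮ x₂ in C(0, 5 * R), ∮ x₁ in C(0, R),
        eFun k 1 x₁ x₂ * (x₁ - x₂) ^ 2 * wPair a x₁ x₂ * wPair b x₁ x₂ /
          ∏ j, ((x₁ - v j) * (x₂ - v j))) =
      (2 * π * I) ^ 2 *
        (numeratorPoly k a b).coeff (Finsupp.single 0 (N - 1) + Finsupp.single 1 (N - 1)) :=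
    fun v hv hvR => by
      have hvR' : ∀ j, ‖v j‖ < R := fun j => by linarith [hvR j, norm_nonneg (v j)]
      simpa only [eval_numeratorPoly] using circleIntegral_circleIntegral_eval_div_prod_sub hN₀
        hP hv hvR' fun j => (hvR' j).trans (by linarith)
  have hzero := circleIntegral_circleIntegral_eval_div_pow hN₀ hP hR (by linarith : 0 < 5 * R)
  simp only [eval_numeratorPoly] at hzero
  exact ⟨fun mu hmu hmuR => (hnodes lam hdist hR3).trans (hnodes mu hmu hmuR).symm,
    (hnodes lam hdist hR3).trans hzero.symm⟩

/-- Invariance under variation of the characters: for `a + b = 2N − 3 − k`, the double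
contour integral is independent of the `λ_j`, and equals its value when all `λ_j = 0`. -/
theorem stmt17 (N k : ℕ) (hN : 2 ≤ N) (hk : 1 ≤ k) (a b : ℕ)
    (hab : (a : ℤ) + (b : ℤ) = 2 * (N : ℤ) - 3 - (k : ℤ))
    (lam : Fin N → ℂ) (hdist : Function.Injective lam)
    (R : ℝ) (hR : 0 < R) (hR3 : ∀ j, 3 * ‖lam j‖ < R) :
    (∀ mu : Fin N → ℂ, Function.Injective mu → (∀ j, 3 * ‖mu j‖ < R) →
      (∮ x₂ in C(0, 5 * R), ∮ x₁ in C(0, R),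
        eFun k 1 x₁ x₂ * (x₁ - x₂) ^ 2 * wPair a x₁ x₂ * wPair b x₁ x₂ /
          ∏ j, ((x₁ - lam j) * (x₂ - lam j))) =
      (∮ x₂ in C(0, 5 * R), ∮ x₁ in C(0, R),
        eFun k 1 x₁ x₂ * (x₁ - x₂) ^ 2 * wPair a x₁ x₂ * wPair b x₁ x₂ /
          ∏ j, ((x₁ - mu j) * (x₂ - mu j)))) ∧
    (∮ x₂ in C(0, 5 * R), ∮ x₁ in C(0, R),
      eFun k 1 x₁ x₂ * (x₁ - x₂) ^ 2 * wPair a x₁ x₂ * wPair b x₁ x₂ /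
        ∏ j, ((x₁ - lam j) * (x₂ - lam j))) =
    (∮ x₂ in C(0, 5 * R), ∮ x₁ in C(0, R),
      eFun k 1 x₁ x₂ * (x₁ - x₂) ^ 2 * wPair a x₁ x₂ * wPair b x₁ x₂ /
        (x₁ ^ N * x₂ ^ N)) :=
  stmt17_general N k a b hab lam hdist R hR hR3
end
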